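/- arXiv:2301.08468 — 3 statements merged into one kernel-verified Lean document; each statement's English description precedes it below -/
import Mathlib

section
/- Let L_{j,i} : ℝ^{n_i} → ℝ^{m_j} for i = 1,…,N and j = 1,…,M be linear operators, and let L : ℝ^{n₁}×⋯×ℝ^{n_N} → ℝ^{m₁}×⋯×ℝ^{m_M} be the block operator whose j-th output component is Σ_{i=1}^N L_{j,i}(x_i). Fix β ∈ [0,2] and real numbers μ_{j,i} ≥ ‖L_{j,i}‖. Define diagonal preconditioners Γ₁ = diag(Γ_{1,1}I, …, Γ_{1,N}I) with Γ_{1,i} = 1/Σ_{j=1}^M μ_{j,i}^{2-β} and Γ₂ = diag(Γ_{2,1}I, …, Γ_{2,M}I) with Γ_{2,j} = 1/Σ_{i=1}^N μ_{j,i}^{β} (assuming all denominators are positive). Then ‖Γ₂^{1/2} ∘ L ∘ Γ₁^{1/2}‖² ≤ 1. -/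
theorem stmt3 {N M : ℕ} (n : Fin N → ℕ) (m : Fin M → ℕ)
    (L : ∀ (j : Fin M) (i : Fin N),
      EuclideanSpace ℝ (Fin (n i)) →L[ℝ] EuclideanSpace ℝ (Fin (m j)))
    (β : ℝ) (hβ : β ∈ Set.Icc (0 : ℝ) 2)
    (μ : Fin M → Fin N → ℝ) (hμ : ∀ j i, ‖L j i‖ ≤ μ j i)
    (Γ₁ : Fin N → ℝ) (Γ₂ : Fin M → ℝ)
    (hΓ₁ : ∀ i, Γ₁ i = (∑ j, μ j i ^ (2 - β))⁻¹)
    (hΓ₂ : ∀ j, Γ₂ j = (∑ i, μ j i ^ β)⁻¹)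
    (hpos₁ : ∀ i, 0 < ∑ j, μ j i ^ (2 - β))
    (hpos₂ : ∀ j, 0 < ∑ i, μ j i ^ β)
    (T : PiLp 2 (fun i => EuclideanSpace ℝ (Fin (n i))) →L[ℝ]
      PiLp 2 (fun j => EuclideanSpace ℝ (Fin (m j))))
    (hT : ∀ x j, T x j = Real.sqrt (Γ₂ j) • ∑ i, L j i (Real.sqrt (Γ₁ i) • x i)) :
    ‖T‖ ^ 2 ≤ 1 := by
  have hμ0 : ∀ j i, 0 ≤ μ j i := fun j i => (norm_nonneg _).trans (hμ j i)
  have hΓ₁0 : ∀ i, 0 ≤ Γ₁ i := fun i => by rw [hΓ₁]; exact inv_nonneg.mpr (hpos₁ i).le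
  have hΓ₂0 : ∀ j, 0 ≤ Γ₂ j := fun j => by rw [hΓ₂]; exact inv_nonneg.mpr (hpos₂ j).le
  have key : ∀ a : ℝ, 0 ≤ a → a ^ (β / 2) * a ^ ((2 - β) / 2) = a := by
    intro a ha
    have hsum : β / 2 + (2 - β) / 2 = 1 := by ring
    rw [← Real.rpow_add' ha (by rw [hsum]; norm_num), hsum, Real.rpow_one]
  have keysq : ∀ a t : ℝ, 0 ≤ a → (a ^ (t / 2)) ^ 2 = a ^ t := by
    intro a t ha
    rw [← Real.rpow_natCast (a ^ (t / 2)) 2, ← Real.rpow_mul ha]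
    norm_num
  have hT1 : ‖T‖ ≤ 1 := by
    apply ContinuousLinearMap.opNorm_le_bound _ zero_le_one
    intro x
    rw [one_mul, ← Real.sqrt_sq (norm_nonneg (T x)), ← Real.sqrt_sq (norm_nonneg x)]
    apply Real.sqrt_le_sqrt
    rw [PiLp.norm_sq_eq_of_L2, PiLp.norm_sq_eq_of_L2]
    calc ∑ j, ‖T x j‖ ^ 2
        ≤ ∑ j, ∑ i, μ j i ^ (2 - β) * (Γ₁ i * ‖x i‖ ^ 2) := by
          apply Finset.sum_le_sum
          intro j _
          have h1 : ‖T x j‖ ≤ Real.sqrt (Γ₂ j) *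
              ∑ i, μ j i ^ (β / 2) * (μ j i ^ ((2 - β) / 2) * (Real.sqrt (Γ₁ i) * ‖x i‖)) := by
            rw [hT, norm_smul, Real.norm_eq_abs, abs_of_nonneg (Real.sqrt_nonneg _)]
            gcongr
            calc ‖∑ i, L j i (Real.sqrt (Γ₁ i) • x i)‖
                ≤ ∑ i, ‖L j i (Real.sqrt (Γ₁ i) • x i)‖ := norm_sum_le _ _
              _ ≤ ∑ i, μ j i ^ (β / 2) * (μ j i ^ ((2 - β) / 2) * (Real.sqrt (Γ₁ i) * ‖x i‖)) := by
                  apply Finset.sum_le_sum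
                  intro i _
                  rw [← mul_assoc, key _ (hμ0 j i)]
                  calc ‖L j i (Real.sqrt (Γ₁ i) • x i)‖
                      ≤ ‖L j i‖ * ‖Real.sqrt (Γ₁ i) • x i‖ := (L j i).le_opNorm _
                    _ ≤ μ j i * (Real.sqrt (Γ₁ i) * ‖x i‖) := by
                        rw [norm_smul, Real.norm_eq_abs, abs_of_nonneg (Real.sqrt_nonneg _)]
                        gcongr
                        exact hμ j i
          have h2 : ‖T x j‖ ^ 2 ≤ Γ₂ j *
              ((∑ i, (μ j i ^ (β / 2)) ^ 2) *
                ∑ i, (μ j i ^ ((2 - β) / 2) * (Real.sqrt (Γ₁ i) * ‖x i‖)) ^ 2) := by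
            calc ‖T x j‖ ^ 2
                ≤ (Real.sqrt (Γ₂ j) *
                    ∑ i, μ j i ^ (β / 2) * (μ j i ^ ((2 - β) / 2) * (Real.sqrt (Γ₁ i) * ‖x i‖))) ^ 2 := by
                  apply pow_le_pow_left₀ (norm_nonneg _) h1
              _ = Γ₂ j * (∑ i, μ j i ^ (β / 2) * (μ j i ^ ((2 - β) / 2) * (Real.sqrt (Γ₁ i) * ‖x i‖))) ^ 2 := by
                  rw [mul_pow, Real.sq_sqrt (hΓ₂0 j)]
              _ ≤ _ := by
                  gcongr
                  · exact hΓ₂0 j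
                  · exact Finset.sum_mul_sq_le_sq_mul_sq _ _ _
          have h3 : (∑ i, (μ j i ^ (β / 2)) ^ 2) = ∑ i, μ j i ^ β := by
            exact Finset.sum_congr rfl fun i _ => keysq _ _ (hμ0 j i)
          have h4 : (∑ i, (μ j i ^ ((2 - β) / 2) * (Real.sqrt (Γ₁ i) * ‖x i‖)) ^ 2)
              = ∑ i, μ j i ^ (2 - β) * (Γ₁ i * ‖x i‖ ^ 2) := by
            apply Finset.sum_congr rfl
            intro i _
            rw [mul_pow, mul_pow, keysq _ _ (hμ0 j i), Real.sq_sqrt (hΓ₁0 i)]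
          rw [h3, h4] at h2
          calc ‖T x j‖ ^ 2 ≤ Γ₂ j * ((∑ i, μ j i ^ β) * ∑ i, μ j i ^ (2 - β) * (Γ₁ i * ‖x i‖ ^ 2)) := h2
            _ = ∑ i, μ j i ^ (2 - β) * (Γ₁ i * ‖x i‖ ^ 2) := by
                rw [← mul_assoc, hΓ₂ j, inv_mul_cancel₀ (hpos₂ j).ne', one_mul]
      _ = ∑ i, ‖x i‖ ^ 2 := by
          rw [Finset.sum_comm]
          apply Finset.sum_congr rfl
          intro i _
          rw [← Finset.sum_mul, hΓ₁ i]
          rw [← mul_assoc, mul_inv_cancel₀ (hpos₁ i).ne', one_mul]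
  calc ‖T‖ ^ 2 ≤ 1 ^ 2 := pow_le_pow_left₀ (norm_nonneg _) hT1 2
    _ = 1 := one_pow 2
end

section
/- Let f : ℝ^N → (-∞,∞] be a proper lower-semicontinuous convex function, G symmetric positive definite, and f* its Fenchel conjugate f*(x) = sup_y ⟨x,y⟩ − f(y). Then prox_{G,f*}(x) = x − G^{-1} prox_{G^{-1},f}(Gx). -/
/-!
Put `v = x - G⁻¹ q`. Comparing `q` with the points `q + t (w - q)` and letting `t → 0`, convexity
turns the minimality of `q` into the subgradient inequality `f w ≥ f q + ⟪v, w - q⟫`, i.e.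
`v ∈ ∂f(q)`. Then the affine function `z ↦ ⟪z, q⟫ - f q` lies below `f*` and touches it at `v`
(Fenchel–Young). As `q = G (x - v)`, the point `v` is the strict minimiser of
`½ ‖x - z‖²_G + ⟪z, q⟫`, and hence also of `½ ‖x - z‖²_G + f* z`; so `p = v`.
-/

open scoped RealInnerProductSpace
open Set Filter Topology

section Prox

variable {E : Type*} [NormedAddCommGroup E] [InnerProductSpace ℝ E]

def IsProxPoint (A : E →ₗ[ℝ] E) (f : E → EReal) (x p : E) : Prop :=
  ∀ z, (((1 / 2 : ℝ) * ⟪x - p, A (x - p)⟫ : ℝ) : EReal) + f p ≤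
    (((1 / 2 : ℝ) * ⟪x - z, A (x - z)⟫ : ℝ) : EReal) + f z

-- `ConvexOn` does not apply: `EReal` is not an `ℝ`-module.
def ConvexEReal (f : E → EReal) : Prop :=
  ∀ (x y : E) (θ : ℝ), 0 ≤ θ → θ ≤ 1 →
    f (θ • x + (1 - θ) • y) ≤ (θ : EReal) * f x + ((1 - θ : ℝ) : EReal) * f y

lemma LinearMap.IsSymmetric.inner_map_comm {A : E →ₗ[ℝ] E} (hA : A.IsSymmetric) (u w : E) :
    ⟪u, A w⟫ = ⟪w, A u⟫ := by
  rw [← hA, real_inner_comm]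

lemma LinearMap.IsSymmetric.inner_sub_smul_map_sub_smul {A : E →ₗ[ℝ] E} (hA : A.IsSymmetric)
    (d e : E) (t : ℝ) :
    ⟪d - t • e, A (d - t • e)⟫ = ⟪d, A d⟫ - 2 * t * ⟪A d, e⟫ + t ^ 2 * ⟪e, A e⟫ := by
  simp only [map_sub, map_smul, inner_sub_left, inner_sub_right, real_inner_smul_left,
    real_inner_smul_right]
  rw [hA.inner_map_comm d e, real_inner_comm e]
  ring

lemma le_of_forall_Ioc_le_add_mul {a b M : ℝ} (h : ∀ t ∈ Ioc (0 : ℝ) 1, a ≤ b + t * M) :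
    a ≤ b := by
  have hlim : Tendsto (fun t : ℝ => b + t * M) (𝓝[>] 0) (𝓝 b) := by
    exact ((show Continuous fun t : ℝ => b + t * M by fun_prop).tendsto' 0 b (by simp)).mono_left
      nhdsWithin_le_nhds
  exact ge_of_tendsto hlim (eventually_of_mem (Ioc_mem_nhdsGT one_pos) h)

lemma ConvexEReal.le_add_smul_sub {f : E → EReal} (hf : ConvexEReal f) {q w : E} {r s t : ℝ}
    (hq : f q = r) (hw : f w = s) (ht0 : 0 ≤ t) (ht1 : t ≤ 1) :
    f (q + t • (w - q)) ≤ ((r + t * (s - r) : ℝ) : EReal) := by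
  have hz : q + t • (w - q) = t • w + (1 - t) • q := by module
  calc f (q + t • (w - q)) ≤ (t : EReal) * f w + ((1 - t : ℝ) : EReal) * f q :=
        hz ▸ hf w q t ht0 ht1
    _ = ((r + t * (s - r) : ℝ) : EReal) := by
        rw [hw, hq, ← EReal.coe_mul, ← EReal.coe_mul, ← EReal.coe_add]
        ring_nf

lemma IsProxPoint.ne_top {A : E →ₗ[ℝ] E} {f : E → EReal} {x p : E} (hp : IsProxPoint A f x p)
    (hproper : ∃ z, f z ≠ ⊤) : f p ≠ ⊤ := by
  obtain ⟨z, hz⟩ := hproper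
  intro htop
  have h := (hp z).trans_lt (EReal.add_lt_top (EReal.coe_ne_top _) hz)
  rw [htop, EReal.add_top_of_ne_bot (EReal.coe_ne_bot _)] at h
  exact h.false

lemma IsProxPoint.subgradient {B : E →ₗ[ℝ] E} (hB : B.IsPositive) {f : E → EReal}
    (hbot : ∀ x, f x ≠ ⊥) (hf : ConvexEReal f) {y q : E} (hq : IsProxPoint B f y q) {r : ℝ}
    (hr : f q = r) (w : E) :
    ((r + ⟪B (y - q), w - q⟫ : ℝ) : EReal) ≤ f w := by
  obtain hw | hw := eq_or_ne (f w) ⊤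
  · simp [hw]
  obtain ⟨s, hs⟩ : ∃ s : ℝ, f w = s := ⟨(f w).toReal, (EReal.coe_toReal hw (hbot w)).symm⟩
  rw [hs, EReal.coe_le_coe_iff]
  refine le_of_forall_Ioc_le_add_mul (M := ⟪w - q, B (w - q)⟫ / 2) fun t ⟨ht0, ht1⟩ => ?_
  have h := (hq (q + t • (w - q))).trans (add_le_add_right (hf.le_add_smul_sub hr hs ht0.le ht1) _)
  rw [hr, ← EReal.coe_add, ← EReal.coe_add, EReal.coe_le_coe_iff,
    show y - (q + t • (w - q)) = (y - q) - t • (w - q) by abel,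
    hB.isSymmetric.inner_sub_smul_map_sub_smul] at h
  have : t * (r + ⟪B (y - q), w - q⟫) ≤ t * (s + t * (⟪w - q, B (w - q)⟫ / 2)) := by linarith
  exact le_of_mul_le_mul_left this ht0

lemma iSup_inner_sub_le_of_subgradient {f : E → EReal} {v q : E} {r : ℝ}
    (hsub : ∀ w, ((r + ⟪v, w - q⟫ : ℝ) : EReal) ≤ f w) :
    ⨆ w, ((⟪v, w⟫ : ℝ) : EReal) - f w ≤ ((⟪v, q⟫ - r : ℝ) : EReal) := by
  refine iSup_le fun w => ?_
  rw [EReal.sub_le_iff_le_add (.inr (EReal.coe_ne_top _)) (.inr (EReal.coe_ne_bot _))]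
  calc ((⟪v, w⟫ : ℝ) : EReal) = ((⟪v, q⟫ - r : ℝ) : EReal) + ((r + ⟪v, w - q⟫ : ℝ) : EReal) := by
        rw [← EReal.coe_add, inner_sub_right]; ring_nf
    _ ≤ ((⟪v, q⟫ - r : ℝ) : EReal) + f w := add_le_add_right (hsub w) _

lemma IsProxPoint.eq_of_le_affine {A : E →ₗ[ℝ] E} (hA : A.IsSymmetric)
    (hpos : ∀ u ≠ 0, 0 < ⟪u, A u⟫) {g : E → EReal} {x p v : E} {c : ℝ}
    (hp : IsProxPoint A g x p) (hgp : ((⟪p, A (x - v)⟫ - c : ℝ) : EReal) ≤ g p)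
    (hgv : g v ≤ ((⟪v, A (x - v)⟫ - c : ℝ) : EReal)) : p = v := by
  have h := (add_le_add_right hgp _).trans ((hp v).trans (add_le_add_right hgv _))
  rw [← EReal.coe_add, ← EReal.coe_add, EReal.coe_le_coe_iff] at h
  have hid : ⟪p - v, A (p - v)⟫ = ⟪x - p, A (x - p)⟫ + 2 * ⟪p, A (x - v)⟫
      - ⟪x - v, A (x - v)⟫ - 2 * ⟪v, A (x - v)⟫ := by
    simp only [map_sub, inner_sub_left, inner_sub_right]
    rw [hA.inner_map_comm v p, hA.inner_map_comm x p, hA.inner_map_comm x v]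
    ring
  by_contra hne
  have := hpos (p - v) (sub_ne_zero.mpr hne)
  linarith

end Prox

namespace Matrix

variable {n : Type*} [Fintype n] [DecidableEq n]

lemma PosDef.inner_toEuclideanLin_pos {G : Matrix n n ℝ} (hG : G.PosDef)
    {u : EuclideanSpace ℝ n} (hu : u ≠ 0) : 0 < ⟪u, toEuclideanLin G u⟫ := by
  rw [toLpLin_apply, EuclideanSpace.inner_eq_star_dotProduct]
  simpa [dotProduct_comm] using hG.dotProduct_mulVec_pos (x := WithLp.ofLp u) (by simpa using hu)

lemma toEuclideanLin_apply_toEuclideanLin_inv {G : Matrix n n ℝ} (hG : IsUnit G.det)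
    (u : EuclideanSpace ℝ n) : toEuclideanLin G (toEuclideanLin G⁻¹ u) = u := by
  simp [toLpLin_apply, mulVec_mulVec, mul_nonsing_inv G hG]

lemma toEuclideanLin_inv_apply_toEuclideanLin {G : Matrix n n ℝ} (hG : IsUnit G.det)
    (u : EuclideanSpace ℝ n) : toEuclideanLin G⁻¹ (toEuclideanLin G u) = u := by
  simp [toLpLin_apply, mulVec_mulVec, nonsing_inv_mul G hG]

end Matrix

theorem stmt11_general {N : ℕ} (f : EuclideanSpace ℝ (Fin N) → EReal)
    (hproper : ∃ x, f x ≠ ⊤) (hnebot : ∀ x, f x ≠ ⊥)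
    (hconv : ∀ (x y : EuclideanSpace ℝ (Fin N)) (θ : ℝ), 0 ≤ θ → θ ≤ 1 →
      f (θ • x + (1 - θ) • y) ≤ (θ : EReal) * f x + ((1 - θ : ℝ) : EReal) * f y)
    (G : Matrix (Fin N) (Fin N) ℝ) (hG : G.PosDef)
    (fstar : EuclideanSpace ℝ (Fin N) → EReal)
    (hfstar : ∀ u, fstar u = ⨆ y, ((⟪u, y⟫ : ℝ) : EReal) - f y)
    (x p q : EuclideanSpace ℝ (Fin N))
    -- p = prox_{G,f*}(x) :
    (hp : ∀ z,
      (((1 / 2 : ℝ) * ⟪x - p, Matrix.toEuclideanLin G (x - p)⟫ : ℝ) : EReal) + fstar p ≤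
        (((1 / 2 : ℝ) * ⟪x - z, Matrix.toEuclideanLin G (x - z)⟫ : ℝ) : EReal) + fstar z)
    -- q = prox_{G⁻¹,f}(G x) :
    (hq : ∀ z,
      (((1 / 2 : ℝ) * ⟪Matrix.toEuclideanLin G x - q,
          Matrix.toEuclideanLin G⁻¹ (Matrix.toEuclideanLin G x - q)⟫ : ℝ) : EReal) + f q ≤
        (((1 / 2 : ℝ) * ⟪Matrix.toEuclideanLin G x - z,
          Matrix.toEuclideanLin G⁻¹ (Matrix.toEuclideanLin G x - z)⟫ : ℝ) : EReal) + f z) :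
    p = x - Matrix.toEuclideanLin G⁻¹ q := by
  set A := Matrix.toEuclideanLin G
  set B := Matrix.toEuclideanLin G⁻¹
  have hdet : IsUnit G.det := hG.det_pos.ne'.isUnit
  have hq : IsProxPoint B f (A x) q := hq
  obtain ⟨r, hr⟩ : ∃ r : ℝ, f q = r :=
    ⟨_, (EReal.coe_toReal (hq.ne_top hproper) (hnebot q)).symm⟩
  have hsub := hq.subgradient (Matrix.isPositive_toEuclideanLin_iff.mpr hG.inv.posSemidef)
    hnebot hconv hr
  have hBAx : B (A x - q) = x - B q := by
    rw [map_sub, Matrix.toEuclideanLin_inv_apply_toEuclideanLin hdet]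
  have hAv : A (x - (x - B q)) = q := by
    rw [sub_sub_cancel, Matrix.toEuclideanLin_apply_toEuclideanLin_inv hdet]
  refine IsProxPoint.eq_of_le_affine (Matrix.isSymmetric_toEuclideanLin_iff.mpr hG.isHermitian)
    (fun u hu => hG.inner_toEuclideanLin_pos hu) (c := r) hp ?_ ?_
  · rw [hfstar, hAv]
    exact le_iSup_of_le q (by rw [hr, EReal.coe_sub])
  · rw [hfstar, hAv]
    exact iSup_inner_sub_le_of_subgradient (hBAx ▸ hsub)

theorem stmt11 {N : ℕ} (f : EuclideanSpace ℝ (Fin N) → EReal)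
    (hproper : ∃ x, f x ≠ ⊤) (hnebot : ∀ x, f x ≠ ⊥)
    (hlsc : LowerSemicontinuous f)
    (hconv : ∀ (x y : EuclideanSpace ℝ (Fin N)) (θ : ℝ), 0 ≤ θ → θ ≤ 1 →
      f (θ • x + (1 - θ) • y) ≤ (θ : EReal) * f x + ((1 - θ : ℝ) : EReal) * f y)
    (G : Matrix (Fin N) (Fin N) ℝ) (hG : G.PosDef)
    (fstar : EuclideanSpace ℝ (Fin N) → EReal)
    (hfstar : ∀ u, fstar u = ⨆ y, ((⟪u, y⟫ : ℝ) : EReal) - f y)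
    (x p q : EuclideanSpace ℝ (Fin N))
    -- p = prox_{G,f*}(x) :
    (hp : ∀ z,
      (((1 / 2 : ℝ) * ⟪x - p, Matrix.toEuclideanLin G (x - p)⟫ : ℝ) : EReal) + fstar p ≤
        (((1 / 2 : ℝ) * ⟪x - z, Matrix.toEuclideanLin G (x - z)⟫ : ℝ) : EReal) + fstar z)
    -- q = prox_{G⁻¹,f}(G x) :
    (hq : ∀ z,
      (((1 / 2 : ℝ) * ⟪Matrix.toEuclideanLin G x - q,
          Matrix.toEuclideanLin G⁻¹ (Matrix.toEuclideanLin G x - q)⟫ : ℝ) : EReal) + f q ≤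
        (((1 / 2 : ℝ) * ⟪Matrix.toEuclideanLin G x - z,
          Matrix.toEuclideanLin G⁻¹ (Matrix.toEuclideanLin G x - z)⟫ : ℝ) : EReal) + f z) :
    p = x - Matrix.toEuclideanLin G⁻¹ q :=
  stmt11_general f hproper hnebot hconv G hG fstar hfstar x p q hp hq
end

section
/- For β = 1, the OVDP preconditioners Γ_{1,i} = 1/Σ_{j=1}^M μ_{j,i} and Γ_{2,j} = 1/Σ_{i=1}^N μ_{j,i}, with μ_{j,i} ≥ ‖L_{j,i}‖ and all μ_{j,i} > 0, satisfy ‖Γ₂^{1/2} ∘ L ∘ Γ₁^{1/2}‖ ≤ 1 for the block operator L = [L_{j,i}]. -/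
theorem stmt17 {N M : ℕ} (n : Fin N → ℕ) (m : Fin M → ℕ)
    (L : ∀ (j : Fin M) (i : Fin N),
      EuclideanSpace ℝ (Fin (n i)) →L[ℝ] EuclideanSpace ℝ (Fin (m j)))
    (μ : Fin M → Fin N → ℝ) (hμpos : ∀ j i, 0 < μ j i)
    (hμ : ∀ j i, ‖L j i‖ ≤ μ j i)
    (Γ₁ : Fin N → ℝ) (Γ₂ : Fin M → ℝ)
    (hΓ₁ : ∀ i, Γ₁ i = (∑ j, μ j i)⁻¹)
    (hΓ₂ : ∀ j, Γ₂ j = (∑ i, μ j i)⁻¹)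
    (T : PiLp 2 (fun i => EuclideanSpace ℝ (Fin (n i))) →L[ℝ]
      PiLp 2 (fun j => EuclideanSpace ℝ (Fin (m j))))
    (hT : ∀ x j, T x j = Real.sqrt (Γ₂ j) • ∑ i, L j i (Real.sqrt (Γ₁ i) • x i)) :
    ‖T‖ ≤ 1 := by
  have hΓ₁nn : ∀ i, 0 ≤ Γ₁ i := fun i => by
    rw [hΓ₁]; exact inv_nonneg.mpr (Finset.sum_nonneg fun j _ => (hμpos j i).le)
  have hΓ₂nn : ∀ j, 0 ≤ Γ₂ j := fun j => by
    rw [hΓ₂]; exact inv_nonneg.mpr (Finset.sum_nonneg fun i _ => (hμpos j i).le)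
  have key2 : ∀ j, Γ₂ j * ∑ i, μ j i ≤ 1 := fun j => by
    rw [hΓ₂]
    rcases (Finset.sum_nonneg fun i _ => (hμpos j i).le).eq_or_lt with h | h
    · rw [← h]; simp
    · rw [inv_mul_cancel₀ h.ne']
  have key1 : ∀ i, (∑ j, μ j i) * Γ₁ i ≤ 1 := fun i => by
    rw [hΓ₁]
    rcases (Finset.sum_nonneg fun j _ => (hμpos j i).le).eq_or_lt with h | h
    · rw [← h]; simp
    · rw [mul_inv_cancel₀ h.ne']
  refine T.opNorm_le_bound zero_le_one fun x => ?_
  rw [one_mul]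
  have hx2 : ‖T x‖ ^ 2 ≤ ‖x‖ ^ 2 := by
    rw [PiLp.norm_sq_eq_of_L2, PiLp.norm_sq_eq_of_L2]
    calc ∑ j, ‖T x j‖ ^ 2
        ≤ ∑ j, ∑ i, μ j i * (Γ₁ i * ‖x i‖ ^ 2) := by
          refine Finset.sum_le_sum fun j _ => ?_
          have h1 : ‖T x j‖ ≤ Real.sqrt (Γ₂ j) *
              ∑ i, μ j i * (Real.sqrt (Γ₁ i) * ‖x i‖) := by
            rw [hT, norm_smul, Real.norm_eq_abs, abs_of_nonneg (Real.sqrt_nonneg _)]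
            refine mul_le_mul_of_nonneg_left ?_ (Real.sqrt_nonneg _)
            refine (norm_sum_le _ _).trans (Finset.sum_le_sum fun i _ => ?_)
            calc ‖L j i (Real.sqrt (Γ₁ i) • x i)‖
                ≤ ‖L j i‖ * ‖Real.sqrt (Γ₁ i) • x i‖ := (L j i).le_opNorm _
              _ ≤ μ j i * (Real.sqrt (Γ₁ i) * ‖x i‖) := by
                  rw [norm_smul, Real.norm_eq_abs, abs_of_nonneg (Real.sqrt_nonneg _)]
                  exact mul_le_mul_of_nonneg_right (hμ j i)
                    (mul_nonneg (Real.sqrt_nonneg _) (norm_nonneg _))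
          have hCS : (∑ i, μ j i * (Real.sqrt (Γ₁ i) * ‖x i‖)) ^ 2 ≤
              (∑ i, μ j i) * ∑ i, μ j i * (Γ₁ i * ‖x i‖ ^ 2) := by
            have h := Finset.sum_mul_sq_le_sq_mul_sq Finset.univ
              (fun i => Real.sqrt (μ j i))
              (fun i => Real.sqrt (μ j i) * (Real.sqrt (Γ₁ i) * ‖x i‖))
            calc (∑ i, μ j i * (Real.sqrt (Γ₁ i) * ‖x i‖)) ^ 2
                = (∑ i, Real.sqrt (μ j i) *
                    (Real.sqrt (μ j i) * (Real.sqrt (Γ₁ i) * ‖x i‖))) ^ 2 := by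
                  congr 1
                  refine Finset.sum_congr rfl fun i _ => ?_
                  have hs := Real.mul_self_sqrt (hμpos j i).le
                  linear_combination (Real.sqrt (Γ₁ i) * ‖x i‖) * hs.symm
              _ ≤ (∑ i, Real.sqrt (μ j i) ^ 2) *
                    ∑ i, (Real.sqrt (μ j i) * (Real.sqrt (Γ₁ i) * ‖x i‖)) ^ 2 := h
              _ = (∑ i, μ j i) * ∑ i, μ j i * (Γ₁ i * ‖x i‖ ^ 2) := by
                  congr 1
                  · exact Finset.sum_congr rfl fun i _ => Real.sq_sqrt (hμpos j i).le
                  · refine Finset.sum_congr rfl fun i _ => ?_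
                    rw [mul_pow, mul_pow, Real.sq_sqrt (hμpos j i).le,
                      Real.sq_sqrt (hΓ₁nn i)]
          have h2 : ‖T x j‖ ^ 2 ≤ Γ₂ j *
              ((∑ i, μ j i) * ∑ i, μ j i * (Γ₁ i * ‖x i‖ ^ 2)) := by
            calc ‖T x j‖ ^ 2 ≤ (Real.sqrt (Γ₂ j) *
                  ∑ i, μ j i * (Real.sqrt (Γ₁ i) * ‖x i‖)) ^ 2 :=
                  pow_le_pow_left₀ (norm_nonneg _) h1 2
              _ = Γ₂ j * (∑ i, μ j i * (Real.sqrt (Γ₁ i) * ‖x i‖)) ^ 2 := by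
                  rw [mul_pow, Real.sq_sqrt (hΓ₂nn j)]
              _ ≤ _ := mul_le_mul_of_nonneg_left hCS (hΓ₂nn j)
          have hnn : 0 ≤ ∑ i, μ j i * (Γ₁ i * ‖x i‖ ^ 2) :=
            Finset.sum_nonneg fun i _ => mul_nonneg (hμpos j i).le
              (mul_nonneg (hΓ₁nn i) (sq_nonneg _))
          nlinarith [h2, key2 j, hnn, hΓ₂nn j,
            Finset.sum_nonneg (fun i (_ : i ∈ Finset.univ) => (hμpos j i).le)]
      _ = ∑ i, (∑ j, μ j i) * (Γ₁ i * ‖x i‖ ^ 2) := by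
          rw [Finset.sum_comm]
          exact Finset.sum_congr rfl fun i _ => (Finset.sum_mul _ _ _).symm
      _ ≤ ∑ i, ‖x i‖ ^ 2 := by
          refine Finset.sum_le_sum fun i _ => ?_
          rw [← mul_assoc]
          nlinarith [key1 i, sq_nonneg ‖x i‖]
  nlinarith [norm_nonneg (T x), norm_nonneg x]
end
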